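/- Let H be a t-saturating weighted graph with weight a_i at each vertex i. Then: (i) a_i < min{deg_H(i), ν(H) + 1} for every vertex i of H; and (ii) a_i ≥ 2 whenever i is adjacent to a leaf vertex of the base graph of H (a vertex adjacent to only one vertex of the graph). -/

import Mathlib

open MvPolynomial
open scoped Classical

noncomputable section

/-! ### Weighted graphs and matchings -/

/-- Number of times the vertex `v` appears in the multiset of edges `M`. -/
def edgeCount {α : Type*} (M : Multiset (Sym2 α)) (v : α) : ℕ :=
  Multiset.countP (fun e => v ∈ e) M

/-- A matching of the weighted graph `(G, w)`: a family of edges of `G` (with repetitions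
allowed) such that every vertex appears in these edges no more times than its weight.
Vertices of weight `0` are regarded as not belonging to the weighted graph. -/
def IsWMatching {α : Type*} (G : SimpleGraph α) (w : α → ℕ) (M : Multiset (Sym2 α)) : Prop :=
  (∀ e ∈ M, e ∈ G.edgeSet) ∧ ∀ v, edgeCount M v ≤ w v

/-- The matching number of the weighted graph `(G, w)`. -/
def nu {α : Type*} (G : SimpleGraph α) (w : α → ℕ) : ℕ :=
  sSup {m | ∃ M : Multiset (Sym2 α), IsWMatching G w M ∧ Multiset.card M = m}

/-- `deg_w(i) = Σ_{j ∈ N_w(i)} w j`, the sum of the weights of the neighbours of `i`. -/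
def wdeg {α : Type*} [Fintype α] (G : SimpleGraph α) (w : α → ℕ) (i : α) : ℕ :=
  ∑ j : α, if G.Adj i j then w j else 0

/-- The weighted graph obtained from `(G, w)` by deleting the (open) neighbourhood of `i`. -/
def delNbr {α : Type*} (G : SimpleGraph α) (w : α → ℕ) (i : α) : α → ℕ :=
  fun j => if G.Adj i j then 0 else w j

/-- The weighted graph obtained from `(G, w)` by deleting the vertices of `N`. -/
def delSet {α : Type*} (w : α → ℕ) (N : Set α) : α → ℕ :=
  fun j => if j ∈ N then 0 else w j

/-- A weighted graph `H = (G, w)` is `t`-saturating if `ν(H) < t` and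
`ν(H − N_H(i)) ≥ t − deg_H(i)` for every vertex `i` of `H`. -/
def TSaturating {α : Type*} [Fintype α] (G : SimpleGraph α) (w : α → ℕ) (t : ℕ) : Prop :=
  nu G w < t ∧ ∀ i, 0 < w i → t ≤ nu G (delNbr G w i) + wdeg G w i

/-- A weighted graph `H = (G, w)` is strongly `t`-saturating if `ν(H) < t` and
`ν(H − j) ≥ t − w j` for every vertex `j` of `H`. -/
def StronglyTSaturating {α : Type*} (G : SimpleGraph α) (w : α → ℕ) (t : ℕ) : Prop :=
  nu G w < t ∧ ∀ j, 0 < w j → t ≤ nu G (delSet w {j}) + w j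

/-! ### Covers, cores, neighbourhoods -/

/-- A (vertex) cover of a graph. -/
def IsVCover {α : Type*} (G : SimpleGraph α) (F : Set α) : Prop :=
  ∀ ⦃i j⦄, G.Adj i j → i ∈ F ∨ j ∈ F

/-- A minimal (vertex) cover of a graph. -/
def IsMinimalVCover {α : Type*} (G : SimpleGraph α) (F : Set α) : Prop :=
  IsVCover G F ∧ ∀ F', IsVCover G F' → F' ⊆ F → F' = F

/-- `core(F)`: the set of vertices of `F` which are not adjacent to any vertex outside `F`. -/
def graphCore {α : Type*} (G : SimpleGraph α) (F : Set α) : Set α :=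
  {i | i ∈ F ∧ ∀ j, G.Adj i j → j ∈ F}

/-- The closed neighbourhood `N[U]` of a set of vertices `U`. -/
def closedNbhd {α : Type*} (G : SimpleGraph α) (U : Set α) : Set α :=
  U ∪ {v | ∃ u ∈ U, G.Adj u v}

/-- `F` is minimal among the covers of `G` containing `S`. -/
def MinimalCoverOver {α : Type*} (G : SimpleGraph α) (S F : Set α) : Prop :=
  IsVCover G F ∧ S ⊆ F ∧ ∀ F', IsVCover G F' → S ⊆ F' → F' ⊆ F → F' = F

/-- `W` is a dominating set: every vertex outside `W` is adjacent to a vertex of `W`. -/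
def IsDominating {α : Type*} (G : SimpleGraph α) (W : Set α) : Prop :=
  ∀ v, v ∉ W → ∃ u ∈ W, G.Adj u v

/-- Every connected component of `H` contains an odd cycle of length at most `L`. -/
def ComponentOddCycleLe {β : Type*} (H : SimpleGraph β) (L : ℕ) : Prop :=
  ∀ c : H.ConnectedComponent, ∃ (v : β) (cyc : H.Walk v v),
    H.connectedComponentMk v = c ∧ cyc.IsCycle ∧ Odd cyc.length ∧ cyc.length ≤ L

/-- Every connected component of `H` contains an odd cycle. -/
def ComponentOddCycle {β : Type*} (H : SimpleGraph β) : Prop :=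
  ∀ c : H.ConnectedComponent, ∃ (v : β) (cyc : H.Walk v v),
    H.connectedComponentMk v = c ∧ cyc.IsCycle ∧ Odd cyc.length

/-! ### Edge ideals -/

/-- The edge ideal of a simple graph. -/
def edgeIdeal (k : Type*) [CommRing k] {σ : Type*} (G : SimpleGraph σ) :
    Ideal (MvPolynomial σ k) :=
  Ideal.span {p | ∃ i j, G.Adj i j ∧ p = X i * X j}

/-- The maximal homogeneous ideal `(x_1, …, x_n)`. -/
def maxIdeal (k : Type*) [CommRing k] (σ : Type*) : Ideal (MvPolynomial σ k) :=
  Ideal.span (Set.range (X : σ → MvPolynomial σ k))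

/-- `P_F`, the ideal generated by the variables `x_i`, `i ∈ F`. -/
def varIdeal (k : Type*) [CommRing k] {σ : Type*} (F : Set σ) : Ideal (MvPolynomial σ k) :=
  Ideal.span ((fun i => (X i : MvPolynomial σ k)) '' F)

/-- The monomial `x^a`. -/
def monom (k : Type*) [CommRing k] {n : ℕ} (a : Fin n → ℕ) : MvPolynomial (Fin n) k :=
  ∏ i : Fin n, (X i : MvPolynomial (Fin n) k) ^ a i

/-- `f` belongs to the saturation `J̃ = ⋃_{m ≥ 1} (J : 𝔪^m)` of `J`. -/
def inSaturation (k : Type*) [CommRing k] {σ : Type*} (J : Ideal (MvPolynomial σ k))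
    (f : MvPolynomial σ k) : Prop :=
  ∃ m : ℕ, f ∈ Submodule.colon J (((maxIdeal k σ) ^ m : Ideal (MvPolynomial σ k)) : Set (MvPolynomial σ k))

/-- `P` is an associated prime of the ideal `J`, i.e. of the module `R ⧸ J`. -/
def assocPrime {R : Type*} [CommRing R] (J P : Ideal R) : Prop :=
  P ∈ associatedPrimes R (R ⧸ J)

/-- `P` is an embedded associated prime of `J`: an associated prime of `R ⧸ J` which is
not a minimal prime of `J`. -/
def embeddedAssocPrime {R : Type*} [CommRing R] (J P : Ideal R) : Prop :=
  assocPrime J P ∧ P ∉ J.minimalPrimes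

/-- The five configurations appearing in the description of `Ass(I³)`: a triangle; a union
of an edge and a triangle meeting at exactly one vertex; a union of two vertex-disjoint
triangles with no edges between them; a union of two triangles meeting at exactly one
vertex; a pentagon. `W` is the vertex set of the subgraph. -/
def Config3 {α : Type*} (G : SimpleGraph α) (W : Set α) : Prop :=
  (∃ u v w : α, u ≠ v ∧ u ≠ w ∧ v ≠ w ∧ G.Adj u v ∧ G.Adj v w ∧ G.Adj u w ∧
    W = {u, v, w}) ∨
  (∃ i j h v : α, [i, j, h, v].Pairwise (· ≠ ·) ∧ G.Adj i j ∧ G.Adj j h ∧ G.Adj i h ∧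
    G.Adj i v ∧ W = {i, j, h, v}) ∨
  (∃ u₁ v₁ w₁ u₂ v₂ w₂ : α, [u₁, v₁, w₁, u₂, v₂, w₂].Pairwise (· ≠ ·) ∧
    G.Adj u₁ v₁ ∧ G.Adj v₁ w₁ ∧ G.Adj u₁ w₁ ∧ G.Adj u₂ v₂ ∧ G.Adj v₂ w₂ ∧ G.Adj u₂ w₂ ∧
    (∀ x ∈ ({u₁, v₁, w₁} : Set α), ∀ y ∈ ({u₂, v₂, w₂} : Set α), ¬ G.Adj x y) ∧
    W = {u₁, v₁, w₁, u₂, v₂, w₂}) ∨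
  (∃ i j h u v : α, [i, j, h, u, v].Pairwise (· ≠ ·) ∧
    G.Adj i j ∧ G.Adj j h ∧ G.Adj i h ∧ G.Adj i u ∧ G.Adj u v ∧ G.Adj i v ∧
    W = {i, j, h, u, v}) ∨
  (∃ p : Fin 5 → α, Function.Injective p ∧ (∀ i : Fin 5, G.Adj (p i) (p (i + 1))) ∧
    W = Set.range p)

end

/-!
A maximum matching of `H − N_H(i)` never uses `i`, whose neighbours all have weight `0` there,
so it can be enlarged by `min (a_i, deg_H(i))` edges from `i` into its neighbourhood. Hence
`ν(H) ≥ ν(H − N_H(i)) + min (a_i, deg_H(i))`, and `t`-saturation forces `a_i < deg_H(i)`, which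
in turn gives `a_i ≤ ν(H)`. If `j` is a leaf hanging at `i`, then `deg_H(j) = a_i`, so
`a_i > a_j ≥ 1`.
-/

lemma Multiset.exists_le_card_eq_min {α : Type*} (s : Multiset α) (n : ℕ) :
    ∃ t ≤ s, Multiset.card t = min n (Multiset.card s) := by
  refine ⟨(s.toList.take n : Multiset α), ?_, by simp⟩
  conv_rhs => rw [← Multiset.coe_toList s]
  exact Multiset.coe_le.mpr (List.take_sublist _ _).subperm

section EdgeCount

variable {α : Type*}

lemma edgeCount_add (M N : Multiset (Sym2 α)) (v : α) :
    edgeCount (M + N) v = edgeCount M v + edgeCount N v :=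
  Multiset.countP_add _ _ _

lemma edgeCount_map_mk (i v : α) (T : Multiset α) :
    edgeCount (T.map fun j => s(i, j)) v = if v = i then Multiset.card T else T.count v := by
  rw [edgeCount, Multiset.countP_map]
  split_ifs with hvi
  · subst hvi
    simp
  · rw [Multiset.count, Multiset.countP_eq_card_filter]
    congr 1
    exact Multiset.filter_congr fun j _ => by simp [Sym2.mem_iff, hvi]

lemma card_le_sum_edgeCount [Fintype α] (M : Multiset (Sym2 α)) :
    Multiset.card M ≤ ∑ v, edgeCount M v := by
  induction M using Multiset.induction with
  | empty => simp
  | cons e M ih =>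
    have hcons (v : α) : edgeCount (e ::ₘ M) v = edgeCount M v + if v ∈ e then 1 else 0 :=
      Multiset.countP_cons _ _ _
    have he : 1 ≤ ∑ v, if v ∈ e then 1 else 0 :=
      calc 1 = if e.out.1 ∈ e then 1 else 0 := by simp [Sym2.out_fst_mem]
        _ ≤ _ := Finset.single_le_sum (f := fun v => if v ∈ e then 1 else 0)
            (fun _ _ => Nat.zero_le _) (Finset.mem_univ _)
    simp only [Multiset.card_cons, hcons, Finset.sum_add_distrib]
    omega

end EdgeCount

section MatchingNumber

variable {α : Type*} [Fintype α] {G : SimpleGraph α} {w : α → ℕ}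

lemma nu_bddAbove (G : SimpleGraph α) (w : α → ℕ) :
    BddAbove {m | ∃ M : Multiset (Sym2 α), IsWMatching G w M ∧ Multiset.card M = m} := by
  refine ⟨∑ v, w v, ?_⟩
  rintro _ ⟨M, hM, rfl⟩
  exact (card_le_sum_edgeCount M).trans (Finset.sum_le_sum fun v _ => hM.2 v)

lemma IsWMatching.card_le_nu {M : Multiset (Sym2 α)} (hM : IsWMatching G w M) :
    Multiset.card M ≤ nu G w :=
  le_csSup (nu_bddAbove G w) ⟨M, hM, rfl⟩

lemma exists_isWMatching_card_eq_nu (G : SimpleGraph α) (w : α → ℕ) :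
    ∃ M : Multiset (Sym2 α), IsWMatching G w M ∧ Multiset.card M = nu G w := by
  have hzero : IsWMatching G w 0 := ⟨by simp, by simp [edgeCount]⟩
  exact Nat.sSup_mem (s := {m | ∃ M, IsWMatching G w M ∧ Multiset.card M = m})
    ⟨0, 0, hzero, rfl⟩ (nu_bddAbove G w)

end MatchingNumber

section Neighbourhood

variable {α : Type*} {G : SimpleGraph α} {w : α → ℕ} {i : α} {M : Multiset (Sym2 α)}

lemma IsWMatching.edgeCount_delNbr_eq_zero_of_adj {j : α}
    (hM : IsWMatching G (delNbr G w i) M) (hij : G.Adj i j) : edgeCount M j = 0 := by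
  simpa [delNbr, hij] using hM.2 j

lemma IsWMatching.edgeCount_delNbr_self_eq_zero (hM : IsWMatching G (delNbr G w i) M) :
    edgeCount M i = 0 := by
  by_contra h
  obtain ⟨e, he, hie⟩ := Multiset.countP_pos.mp (Nat.pos_of_ne_zero h)
  obtain ⟨j, rfl⟩ := Sym2.mem_iff_exists.mp hie
  have hj : 0 < edgeCount M j := Multiset.countP_pos.mpr ⟨_, he, Sym2.mem_mk_right i j⟩
  exact hj.ne' (hM.edgeCount_delNbr_eq_zero_of_adj (hM.1 _ he))

variable [Fintype α]

noncomputable def wNbrMultiset (G : SimpleGraph α) (w : α → ℕ) (i : α) : Multiset α :=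
  ∑ j, Multiset.replicate (if G.Adj i j then w j else 0) j

lemma card_wNbrMultiset : Multiset.card (wNbrMultiset G w i) = wdeg G w i := by
  simp only [wNbrMultiset, Multiset.card_sum, Multiset.card_replicate, wdeg]

lemma count_wNbrMultiset (v : α) :
    (wNbrMultiset G w i).count v = if G.Adj i v then w v else 0 := by
  simp [wNbrMultiset, Multiset.count_sum', Multiset.count_replicate]

theorem nu_delNbr_add_min_le (G : SimpleGraph α) (w : α → ℕ) (i : α) :
    nu G (delNbr G w i) + min (w i) (wdeg G w i) ≤ nu G w := by
  obtain ⟨M, hM, hMcard⟩ := exists_isWMatching_card_eq_nu G (delNbr G w i)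
  obtain ⟨T, hTS, hTcard⟩ := (wNbrMultiset G w i).exists_le_card_eq_min (w i)
  rw [card_wNbrMultiset] at hTcard
  have hT (v : α) : T.count v ≤ if G.Adj i v then w v else 0 := by
    simpa only [count_wNbrMultiset] using Multiset.count_le_of_le v hTS
  have hmatch : IsWMatching G w (M + T.map fun j => s(i, j)) := by
    refine ⟨fun e he => ?_, fun v => ?_⟩
    · rcases Multiset.mem_add.mp he with he | he
      · exact hM.1 e he
      · obtain ⟨j, hj, rfl⟩ := Multiset.mem_map.mp he
        have hjT := (Multiset.count_pos.mpr hj).trans_le (hT j)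
        rw [SimpleGraph.mem_edgeSet]
        by_contra hij
        simp [hij] at hjT
    · have hMv := hM.2 v
      have hTv := hT v
      rw [edgeCount_add, edgeCount_map_mk]
      by_cases hvi : v = i
      · subst hvi
        rw [if_pos rfl, hM.edgeCount_delNbr_self_eq_zero]
        omega
      rw [if_neg hvi]
      by_cases hiv : G.Adj i v
      · rw [if_pos hiv] at hTv
        rw [hM.edgeCount_delNbr_eq_zero_of_adj hiv]
        omega
      · rw [if_neg hiv] at hTv
        simp only [delNbr, hiv, if_false] at hMv
        omega
  calc nu G (delNbr G w i) + min (w i) (wdeg G w i)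
      = Multiset.card (M + T.map fun j => s(i, j)) := by simp [hMcard, hTcard]
    _ ≤ nu G w := hmatch.card_le_nu

lemma wdeg_eq_of_forall_adj_eq {j : α} (hji : G.Adj j i) (hleaf : ∀ j', G.Adj j j' → j' = i) :
    wdeg G w j = w i := by
  rw [wdeg, Fintype.sum_eq_single i fun k hk => if_neg fun hjk => hk (hleaf k hjk), if_pos hji]

end Neighbourhood

namespace TSaturating

variable {α : Type*} [Fintype α] {G : SimpleGraph α} {w : α → ℕ} {t : ℕ} {i : α}

theorem lt_wdeg (hsat : TSaturating G w t) (hi : 0 < w i) : w i < wdeg G w i := by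
  by_contra! hle
  have hnu := nu_delNbr_add_min_le G w i
  rw [min_eq_right hle] at hnu
  have hlower := hsat.2 i hi
  have hupper := hsat.1
  omega

theorem le_nu (hsat : TSaturating G w t) (hi : 0 < w i) : w i ≤ nu G w := by
  have hnu := nu_delNbr_add_min_le G w i
  rw [min_eq_left (hsat.lt_wdeg hi).le] at hnu
  omega

end TSaturating

theorem stmt4 {α : Type*} [Fintype α] (G : SimpleGraph α) (w : α → ℕ) (t : ℕ)
    (hw : ∀ i, 0 < w i) (hsat : TSaturating G w t) :
    (∀ i, w i < min (wdeg G w i) (nu G w + 1)) ∧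
      (∀ i j, G.Adj i j → (∀ j', G.Adj j j' → j' = i) → 2 ≤ w i) := by
  refine ⟨fun i => lt_min (hsat.lt_wdeg (hw i)) (Nat.lt_add_one_of_le (hsat.le_nu (hw i))), ?_⟩
  intro i j hij hleaf
  have hj := hsat.lt_wdeg (hw j)
  rw [wdeg_eq_of_forall_adj_eq hij.symm hleaf] at hj
  have := hw j
  omega
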